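/- arXiv:0709.0415 — 4 statements merged into one kernel-verified Lean document; each statement's English description precedes it below -/
import Mathlib

section
/- Every solution u of the BVP satisfies u(t) ≥ 0 for all t ∈ [0,T]. -/
open Set MeasureTheory

/-- The p-Laplacian map `φ_p(s) = |s|^(p-2) s` (with `φ_p 0 = 0`). -/
noncomputable def phi (p s : ℝ) : ℝ := |s| ^ (p - 2) * s

/-- `h_u(r) = f(u(r)) / (∫₀ᵀ f(u(τ)) dτ)^k`. -/
noncomputable def hfun (T k : ℝ) (f u : ℝ → ℝ) (r : ℝ) : ℝ :=
  f (u r) / (∫ τ in (0:ℝ)..T, f (u τ)) ^ k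

/-- `A_u = −(λβ/(1−β)) ∫₀^η h_u(r) dr`. -/
noncomputable def Afun (T η β lam k : ℝ) (f u : ℝ → ℝ) : ℝ :=
  -(lam * β / (1 - β)) * ∫ r in (0:ℝ)..η, hfun T k f u r

/-- `g_u(s) = λ ∫₀^s h_u(r) dr − A_u`. -/
noncomputable def gfun (T η β lam k : ℝ) (f u : ℝ → ℝ) (s : ℝ) : ℝ :=
  lam * (∫ r in (0:ℝ)..s, hfun T k f u r) - Afun T η β lam k f u

/-- `B_u = (1/(1−β)) ( ∫₀^T φ_q(g_u(s)) ds − β ∫₀^η φ_q(g_u(s)) ds )`. -/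
noncomputable def Bfun (T η β lam k q : ℝ) (f u : ℝ → ℝ) : ℝ :=
  (1 / (1 - β)) * ((∫ s in (0:ℝ)..T, phi q (gfun T η β lam k f u s))
    - β * ∫ s in (0:ℝ)..η, phi q (gfun T η β lam k f u s))

/-- `u` (with derivative `u'`) is a solution of the boundary value problem:
`u` is continuously differentiable on `[0,T]`, `φ_p ∘ u'` is differentiable on `(0,T)` with
`−(φ_p(u'(t)))' = λ h_u(t)` there, `φ_p(u'(0)) − β φ_p(u'(η)) = 0` and `u(T) − β u(η) = 0`. -/
def IsSolution (T η β lam k p : ℝ) (f u u' : ℝ → ℝ) : Prop :=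
  (∀ t ∈ Set.Icc (0:ℝ) T, HasDerivWithinAt u (u' t) (Set.Icc (0:ℝ) T) t) ∧
  ContinuousOn u' (Set.Icc (0:ℝ) T) ∧
  (∀ t ∈ Set.Ioo (0:ℝ) T, HasDerivAt (fun s => phi p (u' s)) (-(lam * hfun T k f u t)) t) ∧
  phi p (u' 0) - β * phi p (u' η) = 0 ∧
  u T - β * u η = 0

/-!
Since `h_u ≥ 0`, the equation makes `φ_p ∘ u'` antitone on `[0,T]`. The condition
`φ_p(u'(0)) = β φ_p(u'(η))` with `0 ≤ β < 1` then forces `φ_p(u'(0)) ≤ 0`, hence `u' ≤ 0`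
and `u` is antitone. Finally `u(T) = β u(η) ≥ β u(T)` gives `u(T) ≥ 0`, and `u ≥ u(T)`.
-/

open Filter Topology

lemma abs_phi {p : ℝ} (hp : 1 < p) (s : ℝ) : |phi p s| = |s| ^ (p - 1) := by
  rcases eq_or_ne s 0 with rfl | hs
  · simp [phi, Real.zero_rpow (sub_ne_zero.2 hp.ne')]
  · rw [phi, abs_mul, abs_of_nonneg (Real.rpow_nonneg (abs_nonneg s) _),
      ← Real.rpow_add_one (abs_ne_zero.2 hs)]
    congr 1
    ring

lemma continuous_phi {p : ℝ} (hp : 1 < p) : Continuous (phi p) := by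
  rw [continuous_iff_continuousAt]
  intro a
  rcases eq_or_ne a 0 with rfl | ha
  · have hpow : Tendsto (fun s : ℝ => |s| ^ (p - 1)) (𝓝 0) (𝓝 0) := by
      simpa [Function.comp_def, Real.zero_rpow (sub_ne_zero.2 hp.ne')] using
        ((Real.continuous_rpow_const (sub_nonneg.2 hp.le)).comp continuous_abs).tendsto 0
    rw [ContinuousAt, show phi p 0 = 0 by simp [phi]]
    exact squeeze_zero_norm (fun s => (Real.norm_eq_abs _).trans_le (abs_phi hp s).le) hpow
  · exact ((Real.continuousAt_rpow_const _ _ (Or.inl (abs_ne_zero.2 ha))).comp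
      continuous_abs.continuousAt).mul continuousAt_id

lemma phi_nonpos_iff {p s : ℝ} : phi p s ≤ 0 ↔ s ≤ 0 := by
  constructor
  · intro h
    by_contra! hs
    exact h.not_gt (mul_pos (Real.rpow_pos_of_pos (abs_pos.2 hs.ne') _) hs)
  · exact mul_nonpos_of_nonneg_of_nonpos (Real.rpow_nonneg (abs_nonneg s) _)

lemma hfun_nonneg {T k : ℝ} {f u : ℝ → ℝ} (hT : 0 ≤ T) (hf : ∀ x, 0 ≤ f x) (r : ℝ) :
    0 ≤ hfun T k f u r :=
  div_nonneg (hf _) (Real.rpow_nonneg (intervalIntegral.integral_nonneg hT fun _ _ => hf _) _)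

section BoundaryCondition

variable {g : ℝ → ℝ} {a b c β : ℝ}

lemma AntitoneOn.nonpos_of_left_eq_mul (hg : AntitoneOn g (Icc a b)) (hc : c ∈ Icc a b)
    (hβ0 : 0 ≤ β) (hβ1 : β < 1) (hbc : g a = β * g c) : ∀ t ∈ Icc a b, g t ≤ 0 := by
  intro t ht
  have ha : a ∈ Icc a b := ⟨le_rfl, hc.1.trans hc.2⟩
  have hca : g c ≤ g a := hg ha hc hc.1
  have hc0 : g c ≤ 0 := by nlinarith
  calc g t ≤ g a := hg ha ht ht.1
    _ = β * g c := hbc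
    _ ≤ 0 := mul_nonpos_of_nonneg_of_nonpos hβ0 hc0

lemma AntitoneOn.nonneg_of_right_eq_mul (hg : AntitoneOn g (Icc a b)) (hc : c ∈ Icc a b)
    (hβ0 : 0 ≤ β) (hβ1 : β < 1) (hbc : g b = β * g c) : ∀ t ∈ Icc a b, 0 ≤ g t := by
  intro t ht
  have hb : b ∈ Icc a b := ⟨hc.1.trans hc.2, le_rfl⟩
  have hbc' : g b ≤ g c := hg hc hb hc.2
  have hb0 : 0 ≤ g b := by nlinarith
  exact hb0.trans (hg ht hb ht.2)

end BoundaryCondition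

theorem solution_nonneg_general
    (T η β lam k p : ℝ) (f : ℝ → ℝ)
    (hη : 0 < η) (hηT : η < T) (hβ0 : 0 < β) (hβ1 : β < 1)
    (hlam : 0 < lam) (hp : 1 < p)
    (hfpos : ∀ x, 0 < f x)
    (u u' : ℝ → ℝ) (hu : IsSolution T η β lam k p f u u') :
    ∀ t ∈ Set.Icc (0:ℝ) T, 0 ≤ u t := by
  obtain ⟨hu_deriv, hu'_cont, hode, hbc_left, hbc_right⟩ := hu
  have hηmem : η ∈ Icc 0 T := ⟨hη.le, hηT.le⟩
  have hphi_anti : AntitoneOn (fun s => phi p (u' s)) (Icc 0 T) :=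
    antitoneOn_of_hasDerivWithinAt_nonpos (convex_Icc 0 T)
      ((continuous_phi hp).comp_continuousOn hu'_cont)
      (fun t ht => by rw [interior_Icc] at ht ⊢; exact (hode t ht).hasDerivWithinAt)
      (fun t _ => neg_nonpos.2 <| mul_nonneg hlam.le <|
        hfun_nonneg (hη.trans hηT).le (fun x => (hfpos x).le) t)
  have hu'_nonpos : ∀ t ∈ Icc 0 T, u' t ≤ 0 := fun t ht =>
    phi_nonpos_iff.1 <| hphi_anti.nonpos_of_left_eq_mul hηmem hβ0.le hβ1
      (sub_eq_zero.1 hbc_left) t ht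
  have hu_anti : AntitoneOn u (Icc 0 T) :=
    antitoneOn_of_hasDerivWithinAt_nonpos (convex_Icc 0 T)
      (fun t ht => (hu_deriv t ht).continuousWithinAt)
      (fun t ht => (hu_deriv t (interior_subset ht)).mono interior_subset)
      (fun t ht => hu'_nonpos t (interior_subset ht))
  exact hu_anti.nonneg_of_right_eq_mul hηmem hβ0.le hβ1 (sub_eq_zero.1 hbc_right)

/-- Every solution of the BVP is nonnegative on `[0,T]`. -/
theorem solution_nonneg
    (T η β lam k p : ℝ) (f : ℝ → ℝ)
    (hT : 0 < T) (hη : 0 < η) (hηT : η < T) (hβ0 : 0 < β) (hβ1 : β < 1)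
    (hlam : 0 < lam) (hk : 0 < k) (hp : 1 < p)
    (hf : Continuous f) (hfpos : ∀ x, 0 < f x)
    (u u' : ℝ → ℝ) (hu : IsSolution T η β lam k p f u u') :
    ∀ t ∈ Set.Icc (0:ℝ) T, 0 ≤ u t :=
  solution_nonneg_general T η β lam k p f hη hηT hβ0 hβ1 hlam hp hfpos u u' hu
end

section
/- The operator G maps the cone K into itself: for every u ∈ K, the function Gu is concave on [0,T] and satisfies min_{t∈[0,T]} (Gu)(t) ≥ ρ·‖Gu‖; that is, G(K) ⊆ K. -/
/-!
For `u ∈ K` the function `g_u` is continuous, positive and nondecreasing on `[0,T]` (it is `λ`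
times a primitive of the positive function `h_u`, plus the positive constant `-A_u`), and since
`q > 1` so is `w = φ_q ∘ g_u`. Hence `Gu = -∫₀ᵗ w + B_u` is nonincreasing and concave, and `B_u`
is chosen so that `Gu(T) = β Gu(η)`. This boundary condition forces `Gu ≥ 0`, so that
`‖Gu‖ = Gu(0)` and `min Gu = Gu(T)`, and concavity across `0 < η < T` gives
`(T - η) Gu(0) + η Gu(T) ≤ T Gu(η) = T Gu(T) / β`, which is `ρ Gu(0) ≤ Gu(T)`.
-/

open Set MeasureTheory

/-- The operator `G` of the integral equation: `(Gu)(t) = −∫₀ᵗ φ_q(g_u(s)) ds + B_u`. -/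
noncomputable def Gop (T η β lam k q : ℝ) (f u : ℝ → ℝ) (t : ℝ) : ℝ :=
  -(∫ s in (0:ℝ)..t, phi q (gfun T η β lam k f u s)) + Bfun T η β lam k q f u

/-- The sup norm of `u` over `[0,T]`. -/
noncomputable def supNorm (T : ℝ) (u : ℝ → ℝ) : ℝ := ⨆ t : Set.Icc (0:ℝ) T, |u t|

/-- Membership in the cone `K`: `u` is continuous and concave on `[0,T]` and
`min_{[0,T]} u ≥ ρ ‖u‖`. -/
def InCone (T ρ : ℝ) (u : ℝ → ℝ) : Prop :=
  ContinuousOn u (Set.Icc (0:ℝ) T) ∧ ConcaveOn ℝ (Set.Icc (0:ℝ) T) u ∧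
    ∀ t ∈ Set.Icc (0:ℝ) T, ρ * supNorm T u ≤ u t

lemma phi_of_pos {q x : ℝ} (hx : 0 < x) : phi q x = x ^ (q - 1) := by
  rw [phi, abs_of_pos hx, ← Real.rpow_add_one hx.ne']
  ring_nf

lemma phi_pos {q x : ℝ} (hx : 0 < x) : 0 < phi q x := by
  rw [phi_of_pos hx]
  exact Real.rpow_pos_of_pos hx _

lemma monotoneOn_phi {q : ℝ} (hq : 1 ≤ q) : MonotoneOn (phi q) (Ioi 0) := fun _ hx _ hy hxy => by
  rw [phi_of_pos hx, phi_of_pos hy]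
  exact Real.rpow_le_rpow (le_of_lt hx) hxy (by linarith)

lemma continuousOn_phi (q : ℝ) : ContinuousOn (phi q) (Ioi 0) :=
  (continuousOn_id.rpow_const fun _ hx => Or.inl (ne_of_gt hx)).congr fun _ hx => phi_of_pos hx

section Primitive

variable {w : ℝ → ℝ} {a b : ℝ}

lemma continuousOn_primitive_of_continuousOn (hab : a ≤ b) (hw : ContinuousOn w (Icc a b)) :
    ContinuousOn (fun t => ∫ s in a..t, w s) (Icc a b) := by
  simpa only [uIcc_of_le hab] using
    intervalIntegral.continuousOn_primitive_interval (μ := volume)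
      (hw.integrableOn_compact isCompact_Icc |>.mono_set (uIcc_of_le hab).subset)

lemma monotoneOn_primitive_of_nonneg (hw : ContinuousOn w (Icc a b))
    (hw_nonneg : ∀ x ∈ Icc a b, 0 ≤ w x) :
    MonotoneOn (fun t => ∫ s in a..t, w s) (Icc a b) := fun _ hs _ ht hst =>
  intervalIntegral.integral_mono_interval le_rfl hs.1 hst
    ((ae_restrict_iff' measurableSet_Ioc).mpr <| ae_of_all _ fun x hx =>
      hw_nonneg x ⟨hx.1.le, hx.2.trans ht.2⟩)
    ((hw.mono (Icc_subset_Icc le_rfl ht.2)).intervalIntegrable_of_Icc ht.1)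

lemma hasDerivAt_primitive_of_mem_Ioo (hw : ContinuousOn w (Icc a b)) {t : ℝ} (ht : t ∈ Ioo a b) :
    HasDerivAt (fun x => ∫ s in a..x, w s) (w t) t :=
  intervalIntegral.integral_hasDerivAt_right
    ((hw.mono (Icc_subset_Icc le_rfl ht.2.le)).intervalIntegrable_of_Icc ht.1.le)
    ((hw.mono Ioo_subset_Icc_self).stronglyMeasurableAtFilter isOpen_Ioo t ht)
    (hw.continuousAt (Icc_mem_nhds ht.1 ht.2))

lemma convexOn_primitive_of_monotoneOn (hab : a ≤ b) (hw : ContinuousOn w (Icc a b))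
    (hw_mono : MonotoneOn w (Icc a b)) :
    ConvexOn ℝ (Icc a b) (fun t => ∫ s in a..t, w s) := by
  refine MonotoneOn.convexOn_of_deriv (convex_Icc a b)
    (continuousOn_primitive_of_continuousOn hab hw) ?_ ?_ <;> rw [interior_Icc]
  · exact fun t ht =>
      (hasDerivAt_primitive_of_mem_Ioo hw ht).differentiableAt.differentiableWithinAt
  · intro s hs t ht hst
    rw [(hasDerivAt_primitive_of_mem_Ioo hw hs).deriv,
      (hasDerivAt_primitive_of_mem_Ioo hw ht).deriv]
    exact hw_mono (Ioo_subset_Icc_self hs) (Ioo_subset_Icc_self ht) hst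

end Primitive

section Cone

variable {F : ℝ → ℝ} {T η β : ℝ}

lemma supNorm_le_of_antitoneOn (hT : 0 ≤ T) (hF_anti : AntitoneOn F (Icc 0 T))
    (hF_nonneg : ∀ t ∈ Icc 0 T, 0 ≤ F t) : supNorm T F ≤ F 0 := by
  have : Nonempty (Icc (0:ℝ) T) := ⟨⟨0, left_mem_Icc.2 hT⟩⟩
  refine ciSup_le fun t => ?_
  rw [abs_of_nonneg (hF_nonneg t t.2)]
  exact hF_anti (left_mem_Icc.2 hT) t.2 t.2.1

lemma mul_le_of_concaveOn_of_eq_mul (hη : 0 < η) (hηT : η < T) (hβ0 : 0 ≤ β) (hβ1 : β ≤ 1)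
    (hF_conc : ConcaveOn ℝ (Icc 0 T) F) (hF_bdry : F T = β * F η) :
    β * (T - η) / (T - β * η) * F 0 ≤ F T := by
  have hslope := hF_conc.slope_anti_adjacent (left_mem_Icc.2 (hη.trans hηT).le)
    (right_mem_Icc.2 (hη.trans hηT).le) hη hηT
  rw [sub_zero, div_le_div_iff₀ (sub_pos.2 hηT) hη] at hslope
  have hden : 0 < T - β * η := by nlinarith
  rw [div_mul_eq_mul_div, div_le_iff₀ hden]
  nlinarith

theorem rho_mul_supNorm_le_of_concaveOn (hη : 0 < η) (hηT : η < T) (hβ0 : 0 ≤ β) (hβ1 : β < 1)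
    (hF_conc : ConcaveOn ℝ (Icc 0 T) F) (hF_anti : AntitoneOn F (Icc 0 T))
    (hF_bdry : F T = β * F η) :
    ∀ t ∈ Icc 0 T, β * (T - η) / (T - β * η) * supNorm T F ≤ F t := by
  have hT : 0 ≤ T := (hη.trans hηT).le
  have hηI : η ∈ Icc 0 T := ⟨hη.le, hηT.le⟩
  have hFT_nonneg : 0 ≤ F T := by
    nlinarith [hF_anti hηI (right_mem_Icc.2 hT) hηT.le]
  have hF_nonneg : ∀ t ∈ Icc 0 T, 0 ≤ F t := fun t ht =>
    hFT_nonneg.trans (hF_anti ht (right_mem_Icc.2 hT) ht.2)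
  have hρ : 0 ≤ β * (T - η) / (T - β * η) :=
    div_nonneg (mul_nonneg hβ0 (sub_pos.2 hηT).le) (by nlinarith)
  intro t ht
  calc β * (T - η) / (T - β * η) * supNorm T F
      ≤ β * (T - η) / (T - β * η) * F 0 :=
        mul_le_mul_of_nonneg_left (supNorm_le_of_antitoneOn hT hF_anti hF_nonneg) hρ
    _ ≤ F T := mul_le_of_concaveOn_of_eq_mul hη hηT hβ0 hβ1.le hF_conc hF_bdry
    _ ≤ F t := hF_anti ht (right_mem_Icc.2 hT) ht.2

theorem inCone_neg_primitive_add_const {w : ℝ → ℝ} {B : ℝ} (hη : 0 < η) (hηT : η < T)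
    (hβ0 : 0 ≤ β) (hβ1 : β < 1) (hw : ContinuousOn w (Icc 0 T))
    (hw_nonneg : ∀ s ∈ Icc 0 T, 0 ≤ w s) (hw_mono : MonotoneOn w (Icc 0 T))
    (hbdry : -(∫ s in (0:ℝ)..T, w s) + B = β * (-(∫ s in (0:ℝ)..η, w s) + B)) :
    InCone T (β * (T - η) / (T - β * η)) (fun t => -(∫ s in (0:ℝ)..t, w s) + B) := by
  have hT : 0 ≤ T := (hη.trans hηT).le
  have hconc : ConcaveOn ℝ (Icc 0 T) (fun t => -(∫ s in (0:ℝ)..t, w s) + B) :=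
    (convexOn_primitive_of_monotoneOn hT hw hw_mono).neg.add_const B
  have hanti : AntitoneOn (fun t => -(∫ s in (0:ℝ)..t, w s) + B) (Icc 0 T) :=
    fun _ hs _ ht hst =>
      add_le_add_left (neg_le_neg (monotoneOn_primitive_of_nonneg hw hw_nonneg hs ht hst)) B
  exact ⟨(continuousOn_primitive_of_continuousOn hT hw).neg.add continuousOn_const, hconc,
    rho_mul_supNorm_le_of_concaveOn hη hηT hβ0 hβ1 hconc hanti hbdry⟩

end Cone

section Operator

variable {T η β lam k q : ℝ} {f u : ℝ → ℝ}

lemma continuousOn_hfun (hf : Continuous f) (hu : ContinuousOn u (Icc 0 T)) :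
    ContinuousOn (hfun T k f u) (Icc 0 T) :=
  (hf.comp_continuousOn hu).div_const _

lemma hfun_pos (hT : 0 < T) (hf : Continuous f) (hf_pos : ∀ x, 0 < f x)
    (hu : ContinuousOn u (Icc 0 T)) (r : ℝ) : 0 < hfun T k f u r :=
  div_pos (hf_pos _) <| Real.rpow_pos_of_pos (intervalIntegral.intervalIntegral_pos_of_pos_on
    ((hf.comp_continuousOn hu).intervalIntegrable_of_Icc hT.le) (fun _ _ => hf_pos _) hT) k

lemma neg_Afun_pos (hη : 0 < η) (hηT : η < T) (hβ0 : 0 < β) (hβ1 : β < 1) (hlam : 0 < lam)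
    (hf : Continuous f) (hf_pos : ∀ x, 0 < f x) (hu : ContinuousOn u (Icc 0 T)) :
    0 < -Afun T η β lam k f u := by
  have hT : 0 < T := hη.trans hηT
  have hβ1' : 0 < 1 - β := sub_pos.2 hβ1
  rw [Afun, neg_mul, neg_neg]
  exact mul_pos (by positivity) <| intervalIntegral.intervalIntegral_pos_of_pos_on
    ((continuousOn_hfun hf hu).mono (Icc_subset_Icc le_rfl hηT.le) |>.intervalIntegrable_of_Icc
      hη.le) (fun r _ => hfun_pos hT hf hf_pos hu r) hη

lemma monotoneOn_gfun (hT : 0 < T) (hlam : 0 ≤ lam) (hf : Continuous f)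
    (hf_pos : ∀ x, 0 < f x) (hu : ContinuousOn u (Icc 0 T)) :
    MonotoneOn (gfun T η β lam k f u) (Icc 0 T) := fun _ hs _ ht hst =>
  sub_le_sub_right (mul_le_mul_of_nonneg_left (monotoneOn_primitive_of_nonneg
    (continuousOn_hfun hf hu) (fun r _ => (hfun_pos hT hf hf_pos hu r).le) hs ht hst) hlam) _

lemma gfun_pos (hη : 0 < η) (hηT : η < T) (hβ0 : 0 < β) (hβ1 : β < 1) (hlam : 0 < lam)
    (hf : Continuous f) (hf_pos : ∀ x, 0 < f x) (hu : ContinuousOn u (Icc 0 T)) :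
    ∀ s ∈ Icc 0 T, 0 < gfun T η β lam k f u s := fun s hs => by
  have hT : 0 < T := hη.trans hηT
  have hg0 : gfun T η β lam k f u 0 = -Afun T η β lam k f u := by
    rw [gfun, intervalIntegral.integral_same, mul_zero, zero_sub]
  calc 0 < gfun T η β lam k f u 0 := hg0 ▸ neg_Afun_pos hη hηT hβ0 hβ1 hlam hf hf_pos hu
    _ ≤ gfun T η β lam k f u s :=
      monotoneOn_gfun hT hlam.le hf hf_pos hu (left_mem_Icc.2 hT.le) hs hs.1

lemma continuousOn_gfun (hT : 0 < T) (hf : Continuous f) (hu : ContinuousOn u (Icc 0 T)) :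
    ContinuousOn (gfun T η β lam k f u) (Icc 0 T) :=
  (continuousOn_const.mul (continuousOn_primitive_of_continuousOn hT.le
    (continuousOn_hfun hf hu))).sub continuousOn_const

lemma Gop_endpoint_eq_mul (hβ : β ≠ 1) :
    Gop T η β lam k q f u T = β * Gop T η β lam k q f u η := by
  have : 1 - β ≠ 0 := sub_ne_zero.2 hβ.symm
  simp only [Gop, Bfun]
  field_simp
  ring

end Operator

theorem G_maps_cone_into_cone_general
    (T η β lam k p q : ℝ) (f : ℝ → ℝ)
    (hη : 0 < η) (hηT : η < T) (hβ0 : 0 < β) (hβ1 : β < 1)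
    (hlam : 0 < lam) (hp : 1 < p) (hpq : 1 / p + 1 / q = 1)
    (hf : Continuous f) (hfpos : ∀ x, 0 < f x) :
    ∀ u : ℝ → ℝ, InCone T (β * (T - η) / (T - β * η)) u →
      InCone T (β * (T - η) / (T - β * η)) (Gop T η β lam k q f u) := by
  rintro u ⟨hu, -, -⟩
  have hT : 0 < T := hη.trans hηT
  have hq : 1 < q :=
    (Real.holderConjugate_iff.mpr ⟨hp, by simpa only [one_div] using hpq⟩).symm.lt
  have hg : MapsTo (gfun T η β lam k f u) (Icc 0 T) (Ioi 0) := fun s hs =>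
    gfun_pos hη hηT hβ0 hβ1 hlam hf hfpos hu s hs
  exact inCone_neg_primitive_add_const hη hηT hβ0.le hβ1
    ((continuousOn_phi q).comp (continuousOn_gfun hT hf hu) hg)
    (fun s hs => (phi_pos (hg hs)).le)
    ((monotoneOn_phi hq.le).comp (monotoneOn_gfun hT hlam.le hf hfpos hu) hg)
    (Gop_endpoint_eq_mul hβ1.ne)

/-- `G` maps the cone `K` into itself: `G(K) ⊆ K`. -/
theorem G_maps_cone_into_cone
    (T η β lam k p q : ℝ) (f : ℝ → ℝ)
    (hT : 0 < T) (hη : 0 < η) (hηT : η < T) (hβ0 : 0 < β) (hβ1 : β < 1)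
    (hlam : 0 < lam) (hk : 0 < k) (hp : 1 < p) (hpq : 1 / p + 1 / q = 1)
    (hf : Continuous f) (hfpos : ∀ x, 0 < f x) :
    ∀ u : ℝ → ℝ, InCone T (β * (T - η) / (T - β * η)) u →
      InCone T (β * (T - η) / (T - β * η)) (Gop T η β lam k q f u) :=
  G_maps_cone_into_cone_general T η β lam k p q f hη hηT hβ0 hβ1 hlam hp hpq hf hfpos
end

section
/- A function u : {0,…,T} → ℝ is a solution of the discrete BVP if and only if u(t) = −Σ_{s=0}^{t−1} φ_q(g_u(s)) + B_u for all t ∈ {0,…,T}, where A_u = −(λβ/(1−β)) Σ_{r=1}^{η} h_u(r), g_u(s) = λ Σ_{r=1}^{s} h_u(r) − A_u, and B_u = (1/(1−β)) ( Σ_{s=0}^{T−1} φ_q(g_u(s)) − β Σ_{s=0}^{η−1} φ_q(g_u(s)) ). Moreover, for any solution, φ_p(Δu(0)) = A_u and u(0) = B_u. -/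
/-!
The interior equation says that `φ_p(Δu) + g_u` is constant on `{0,…,T-1}`, and the first
boundary condition, through the identity `A_u = -β g_u(η)`, that this constant is `0`; since
`φ_q` inverts `φ_p`, this means `Δu = -φ_q(g_u)`, i.e. that `u + Σ_{s<·} φ_q(g_u(s))` is constant
on `{0,…,T}`. The second boundary condition then pins that constant down to `B_u`.
-/

open Finset

/-- Discrete `h_u(t) = f(u(t)) / (Σ_{τ=1}^{T} f(u(τ)))^k`. -/
noncomputable def hfunD (T : ℕ) (k : ℝ) (f : ℝ → ℝ) (u : ℕ → ℝ) (t : ℕ) : ℝ :=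
  f (u t) / (∑ τ ∈ Finset.Icc 1 T, f (u τ)) ^ k

/-- Discrete `A_u = −(λβ/(1−β)) Σ_{r=1}^{η} h_u(r)`. -/
noncomputable def AfunD (T η : ℕ) (β lam k : ℝ) (f : ℝ → ℝ) (u : ℕ → ℝ) : ℝ :=
  -(lam * β / (1 - β)) * ∑ r ∈ Finset.Icc 1 η, hfunD T k f u r

/-- Discrete `g_u(s) = λ Σ_{r=1}^{s} h_u(r) − A_u`. -/
noncomputable def gfunD (T η : ℕ) (β lam k : ℝ) (f : ℝ → ℝ) (u : ℕ → ℝ) (s : ℕ) : ℝ :=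
  lam * (∑ r ∈ Finset.Icc 1 s, hfunD T k f u r) - AfunD T η β lam k f u

/-- Discrete `B_u = (1/(1−β)) ( Σ_{s=0}^{T−1} φ_q(g_u(s)) − β Σ_{s=0}^{η−1} φ_q(g_u(s)) )`. -/
noncomputable def BfunD (T η : ℕ) (β lam k q : ℝ) (f : ℝ → ℝ) (u : ℕ → ℝ) : ℝ :=
  (1 / (1 - β)) * ((∑ s ∈ Finset.range T, phi q (gfunD T η β lam k f u s))
    - β * ∑ s ∈ Finset.range η, phi q (gfunD T η β lam k f u s))

/-- `u : {0,…,T} → ℝ` is a solution of the discrete BVP: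
`−(φ_p(Δu(t)) − φ_p(Δu(t−1))) = λ h_u(t)` for `t ∈ {1,…,T−1}`,
`φ_p(Δu(0)) − β φ_p(Δu(η)) = 0` and `u(T) − β u(η) = 0`, where `Δu(t) = u(t+1) − u(t)`. -/
def IsSolutionD (T η : ℕ) (β lam k p : ℝ) (f : ℝ → ℝ) (u : ℕ → ℝ) : Prop :=
  (∀ t ∈ Finset.Icc 1 (T - 1),
      -(phi p (u (t + 1) - u t) - phi p (u t - u (t - 1))) = lam * hfunD T k f u t) ∧
  phi p (u 1 - u 0) - β * phi p (u (η + 1) - u η) = 0 ∧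
  u T - β * u η = 0

lemma phi_neg (p s : ℝ) : phi p (-s) = -phi p s := by
  simp [phi]

/-- `|s|^(p-2) s` has absolute value `|s|^(p-1)`, and `(p-1)(q-2) + (p-2) = pq - p - q = 0`. -/
lemma phi_phi {p q : ℝ} (hpq : p * q = p + q) (s : ℝ) : phi q (phi p s) = s := by
  rcases eq_or_ne s 0 with rfl | hs
  · simp [phi]
  have habs : 0 < |s| := abs_pos.2 hs
  have hexp : (p - 2 + 1) * (q - 2) + (p - 2) = 0 := by linear_combination hpq
  unfold phi
  rw [abs_mul, abs_of_nonneg (Real.rpow_nonneg (abs_nonneg s) _),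
    ← Real.rpow_add_one habs.ne', ← Real.rpow_mul habs.le, ← mul_assoc,
    ← Real.rpow_add habs, hexp, Real.rpow_zero, one_mul]

lemma phi_eq_iff_eq_phi {p q : ℝ} (hpq : p * q = p + q) {x y : ℝ} :
    phi p x = y ↔ x = phi q y := by
  constructor
  · rintro rfl
    exact (phi_phi hpq x).symm
  · rintro rfl
    exact phi_phi (by linear_combination hpq) y

section Sequences

variable {c : ℕ → ℝ} {n : ℕ}

lemma forall_succ_eq_iff_forall_eq_apply_zero :
    (∀ t < n, c (t + 1) = c t) ↔ ∀ t ≤ n, c t = c 0 := by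
  constructor
  · intro h t ht
    induction t with
    | zero => rfl
    | succ t ih => rw [h t (by omega), ih (by omega)]
  · intro h t ht
    rw [h (t + 1) ht, h t ht.le]

lemma forall_le_eq_iff_succ_eq_and_sub_mul_eq {m η : ℕ} {β b : ℝ} (hβ : β ≠ 1)
    (hm : m ≤ n) (hη : η ≤ n) :
    ((∀ t < n, c (t + 1) = c t) ∧ c m - β * c η = (1 - β) * b) ↔ ∀ t ≤ n, c t = b := by
  rw [forall_succ_eq_iff_forall_eq_apply_zero]
  constructor
  · rintro ⟨hconst, hbc⟩ t ht
    rw [hconst m hm, hconst η hη] at hbc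
    have hc0 : c 0 = b := mul_left_cancel₀ (sub_ne_zero.2 hβ.symm) (by linear_combination hbc)
    rw [hconst t ht, hc0]
  · intro h
    refine ⟨fun t ht => by rw [h t ht, h 0 (Nat.zero_le n)], ?_⟩
    rw [h m hm, h η hη]
    ring

lemma forall_eq_neg_sum_add_iff {u d : ℕ → ℝ} {η : ℕ} {β : ℝ} (hβ : β ≠ 1) (hη : η ≤ n) :
    ((∀ t < n, u (t + 1) - u t = -d t) ∧ u n - β * u η = 0) ↔
      ∀ t ≤ n, u t = -(∑ s ∈ range t, d s)
        + 1 / (1 - β) * ((∑ s ∈ range n, d s) - β * ∑ s ∈ range η, d s) := by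
  set B := 1 / (1 - β) * ((∑ s ∈ range n, d s) - β * ∑ s ∈ range η, d s)
  have hB : (1 - β) * B = (∑ s ∈ range n, d s) - β * ∑ s ∈ range η, d s := by
    simp only [B]
    field_simp [sub_ne_zero.2 hβ.symm]
  have hΔ (t : ℕ) : u (t + 1) - u t = -d t ↔
      u (t + 1) + ∑ s ∈ range (t + 1), d s = u t + ∑ s ∈ range t, d s := by
    rw [sum_range_succ]
    constructor <;> intro h <;> linarith
  have hbc : u n - β * u η = 0 ↔
      u n + ∑ s ∈ range n, d s - β * (u η + ∑ s ∈ range η, d s) = (1 - β) * B := by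
    rw [hB]
    constructor <;> intro h <;> linarith
  have hu (t : ℕ) : u t = -(∑ s ∈ range t, d s) + B ↔ u t + ∑ s ∈ range t, d s = B :=
    ⟨fun h => by linarith, fun h => by linarith⟩
  simp only [hΔ, hbc, hu]
  exact forall_le_eq_iff_succ_eq_and_sub_mul_eq (c := fun t => u t + ∑ s ∈ range t, d s)
    hβ le_rfl hη

end Sequences

section BVP

variable {T η : ℕ} {β lam k p : ℝ} {f : ℝ → ℝ} {u : ℕ → ℝ}

lemma gfunD_zero : gfunD T η β lam k f u 0 = -AfunD T η β lam k f u := by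
  simp [gfunD]

lemma gfunD_succ_sub (s : ℕ) :
    gfunD T η β lam k f u (s + 1) - gfunD T η β lam k f u s = lam * hfunD T k f u (s + 1) := by
  simp only [gfunD, sum_Icc_succ_top (by omega : 1 ≤ s + 1)]
  ring

lemma AfunD_eq_neg_mul_gfunD (hβ : β ≠ 1) :
    AfunD T η β lam k f u = -β * gfunD T η β lam k f u η := by
  unfold gfunD AfunD
  field_simp [sub_ne_zero.2 hβ.symm]
  ring

lemma isSolutionD_iff (hβ : β ≠ 1) (hηT : η < T) :
    IsSolutionD T η β lam k p f u ↔
      (∀ t < T, phi p (u (t + 1) - u t) = -gfunD T η β lam k f u t) ∧ u T - β * u η = 0 := by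
  set g := gfunD T η β lam k f u
  set c := fun t => phi p (u (t + 1) - u t) + g t with hc
  have hinterior : (∀ t ∈ Icc 1 (T - 1),
      -(phi p (u (t + 1) - u t) - phi p (u t - u (t - 1))) = lam * hfunD T k f u t) ↔
      ∀ t < T - 1, c (t + 1) = c t := by
    constructor
    · intro h t ht
      have heq := h (t + 1) (mem_Icc.2 ⟨by omega, by omega⟩)
      simp only [Nat.add_sub_cancel] at heq
      have hg : g (t + 1) - g t = lam * hfunD T k f u (t + 1) := gfunD_succ_sub t
      simp only [hc]
      linarith
    · intro h t ht
      rw [mem_Icc] at ht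
      obtain ⟨s, rfl⟩ : ∃ s, t = s + 1 := ⟨t - 1, by omega⟩
      have heq := h s (by omega)
      have hg : g (s + 1) - g s = lam * hfunD T k f u (s + 1) := gfunD_succ_sub s
      simp only [hc, Nat.add_sub_cancel] at heq ⊢
      linarith
  have hbc : phi p (u 1 - u 0) - β * phi p (u (η + 1) - u η) = 0 ↔
      c 0 - β * c η = (1 - β) * 0 := by
    have hA : AfunD T η β lam k f u = -β * g η := AfunD_eq_neg_mul_gfunD hβ
    simp only [hc, zero_add, mul_zero, g, gfunD_zero]
    constructor <;> intro h <;> linarith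
  have hsol : (∀ t ≤ T - 1, c t = 0) ↔ ∀ t < T, phi p (u (t + 1) - u t) = -g t := by
    simp only [hc, ← eq_neg_iff_add_eq_zero]
    exact ⟨fun h t ht => h t (by omega), fun h t ht => h t (by omega)⟩
  unfold IsSolutionD
  rw [← and_assoc, hinterior, hbc,
    forall_le_eq_iff_succ_eq_and_sub_mul_eq hβ (Nat.zero_le _) (by omega), hsol]

end BVP

theorem discrete_summation_characterization_general
    (T η : ℕ) (β lam k p q : ℝ) (f : ℝ → ℝ)
    (hηT : η < T) (hβ1 : β < 1)
    (hp : 1 < p) (hpq : 1 / p + 1 / q = 1)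
    (u : ℕ → ℝ) :
    (IsSolutionD T η β lam k p f u ↔
      ∀ t ≤ T, u t = -(∑ s ∈ Finset.range t, phi q (gfunD T η β lam k f u s))
          + BfunD T η β lam k q f u) ∧
    (IsSolutionD T η β lam k p f u →
      phi p (u 1 - u 0) = AfunD T η β lam k f u ∧ u 0 = BfunD T η β lam k q f u) := by
  have hβ : β ≠ 1 := hβ1.ne
  have hconj : p.HolderConjugate q :=
    Real.holderConjugate_iff.2 ⟨hp, by simpa only [one_div] using hpq⟩
  have hsum : IsSolutionD T η β lam k p f u ↔
      ∀ t ≤ T, u t = -(∑ s ∈ Finset.range t, phi q (gfunD T η β lam k f u s))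
        + BfunD T η β lam k q f u := by
    rw [isSolutionD_iff hβ hηT]
    refine Iff.trans (and_congr_left' (forall₂_congr fun t _ => ?_))
      (forall_eq_neg_sum_add_iff hβ hηT.le)
    rw [phi_eq_iff_eq_phi hconj.mul_eq_add, phi_neg]
  refine ⟨hsum, fun hu => ⟨?_, ?_⟩⟩
  · rw [((isSolutionD_iff hβ hηT).1 hu).1 0 (by omega), gfunD_zero, neg_neg]
  · simpa using (hsum.1 hu) 0 (Nat.zero_le T)

/-- Discrete analogue of Lemma 3.1: `u` solves the discrete BVP iff it satisfies the
summation equation `u(t) = −Σ_{s=0}^{t−1} φ_q(g_u(s)) + B_u` on `{0,…,T}`; moreover any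
solution has `φ_p(Δu(0)) = A_u` and `u(0) = B_u`. -/
theorem discrete_summation_characterization
    (T η : ℕ) (β lam k p q : ℝ) (f : ℝ → ℝ)
    (hT : 2 ≤ T) (hη : 0 < η) (hηT : η < T) (hβ0 : 0 < β) (hβ1 : β < 1)
    (hlam : 0 < lam) (hk : 0 < k) (hp : 1 < p) (hpq : 1 / p + 1 / q = 1)
    (hfpos : ∀ x, 0 < f x) (u : ℕ → ℝ) :
    (IsSolutionD T η β lam k p f u ↔
      ∀ t ≤ T, u t = -(∑ s ∈ Finset.range t, phi q (gfunD T η β lam k f u s))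
          + BfunD T η β lam k q f u) ∧
    (IsSolutionD T η β lam k p f u →
      phi p (u 1 - u 0) = AfunD T η β lam k f u ∧ u 0 = BfunD T η β lam k q f u) :=
  discrete_summation_characterization_general T η β lam k p q f hηT hβ1 hp hpq u
end

section
/- Every solution u of the discrete BVP satisfies Δu(t) ≤ 0 for all t ∈ {0,…,T−1}, the sequence t ↦ Δu(t) is nonincreasing, and u(T) ≥ ρ·u(0), where ρ = β(T−η)/(T−βη) ≥ 0. -/
open Finset

lemma phi_of_nonneg (p : ℝ) (hp : 1 < p) {s : ℝ} (hs : 0 ≤ s) :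
    phi p s = s ^ (p - 1) := by
  unfold phi
  rcases eq_or_lt_of_le hs with h | h
  · rw [← h]; simp [Real.zero_rpow (by linarith : p - 1 ≠ 0)]
  · rw [abs_of_pos h, show p - 1 = (p - 2) + 1 by ring, Real.rpow_add_one h.ne']

lemma phi_of_nonpos (p : ℝ) (hp : 1 < p) {s : ℝ} (hs : s ≤ 0) :
    phi p s = -((-s) ^ (p - 1)) := by
  have h := phi_of_nonneg p hp (neg_nonneg.mpr hs)
  unfold phi at h ⊢
  rw [abs_neg] at h
  nlinarith [h]

lemma phi_strictMono (p : ℝ) (hp : 1 < p) : StrictMono (phi p) := by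
  intro a b hab
  rcases le_or_gt 0 a with ha | ha
  · rw [phi_of_nonneg p hp ha, phi_of_nonneg p hp (ha.trans hab.le)]
    exact Real.rpow_lt_rpow ha hab (by linarith)
  · rcases le_or_gt b 0 with hb | hb
    · rw [phi_of_nonpos p hp ha.le, phi_of_nonpos p hp hb]
      have : (-b) ^ (p - 1) < (-a) ^ (p - 1) :=
        Real.rpow_lt_rpow (by linarith) (by linarith) (by linarith)
      linarith
    · rw [phi_of_nonpos p hp ha.le, phi_of_nonneg p hp hb.le]
      have h1 : 0 < (-a) ^ (p - 1) := Real.rpow_pos_of_pos (by linarith) _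
      have h2 : 0 < b ^ (p - 1) := Real.rpow_pos_of_pos hb _
      linarith

lemma phi_zero (p : ℝ) : phi p 0 = 0 := by simp [phi]

/-- Every solution of the discrete BVP satisfies `Δu(t) ≤ 0` on `{0,…,T−1}`, `Δu` is
nonincreasing, and `u(T) ≥ ρ u(0)` with `ρ = β(T−η)/(T−βη) ≥ 0`. -/
theorem discrete_solution_monotone
    (T η : ℕ) (β lam k p : ℝ) (f : ℝ → ℝ)
    (hT : 2 ≤ T) (hη : 0 < η) (hηT : η < T) (hβ0 : 0 < β) (hβ1 : β < 1)
    (hlam : 0 < lam) (hk : 0 < k) (hp : 1 < p)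
    (hfpos : ∀ x, 0 < f x) (u : ℕ → ℝ) (hu : IsSolutionD T η β lam k p f u) :
    (∀ t ≤ T - 1, u (t + 1) - u t ≤ 0) ∧
    (∀ s t : ℕ, s ≤ t → t ≤ T - 1 → u (t + 1) - u t ≤ u (s + 1) - u s) ∧
    0 ≤ β * ((T : ℝ) - η) / ((T : ℝ) - β * η) ∧
    β * ((T : ℝ) - η) / ((T : ℝ) - β * η) * u 0 ≤ u T := by
  obtain ⟨heq, hbc1, hbc2⟩ := hu
  have hSM := phi_strictMono p hp
  set Φ : ℕ → ℝ := fun t => phi p (u (t + 1) - u t) with hΦ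
  have hS : 0 < ∑ τ ∈ Finset.Icc 1 T, f (u τ) :=
    Finset.sum_pos (fun i _ => hfpos _) (Finset.nonempty_Icc.mpr (by omega))
  have hh : ∀ t, 0 < hfunD T k f u t := fun t =>
    div_pos (hfpos _) (Real.rpow_pos_of_pos hS k)
  -- one-step strict decrease of Φ
  have step : ∀ n, n + 1 ≤ T - 1 → Φ (n + 1) < Φ n := by
    intro n hn
    have h := heq (n + 1) (Finset.mem_Icc.mpr ⟨by omega, hn⟩)
    simp only [Nat.add_sub_cancel] at h
    have hpos := mul_pos hlam (hh (n + 1))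
    simp only [hΦ]
    linarith [h, hpos]
  -- Φ is nonincreasing on [0, T-1]
  have mono : ∀ t, t ≤ T - 1 → ∀ s, s ≤ t → Φ t ≤ Φ s := by
    intro t
    induction t with
    | zero => intro _ s hs; interval_cases s; exact le_refl _
    | succ n ih =>
      intro ht s hs
      rcases Nat.lt_succ_iff_lt_or_eq.mp (Nat.lt_succ_of_le hs) with h | h
      · exact le_trans (step n ht).le (ih (by omega) s (by omega))
      · rw [h]
  -- boundary manipulation
  have hΦ0 : Φ 0 = β * Φ η := by
    have : phi p (u 1 - u 0) = β * phi p (u (η + 1) - u η) := by linarith [hbc1]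
    simpa [hΦ] using this
  have hΦη_lt : Φ η < Φ 0 := by
    have h1 : Φ 1 < Φ 0 := step 0 (by omega)
    have h2 : Φ η ≤ Φ 1 := mono η (by omega) 1 (by omega)
    linarith
  have hΦη_neg : Φ η < 0 := by nlinarith [hΦη_lt, hΦ0]
  have hΦ0_neg : Φ 0 < 0 := by rw [hΦ0]; exact mul_neg_of_pos_of_neg hβ0 hΦη_neg
  -- Part 1
  have part1 : ∀ t ≤ T - 1, u (t + 1) - u t ≤ 0 := by
    intro t ht
    have hΦt : Φ t < 0 := lt_of_le_of_lt (mono t ht 0 (Nat.zero_le _)) hΦ0_neg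
    have : phi p (u (t + 1) - u t) < phi p 0 := by rw [phi_zero]; exact hΦt
    exact (hSM.lt_iff_lt.mp this).le
  -- Part 2
  have part2 : ∀ s t : ℕ, s ≤ t → t ≤ T - 1 → u (t + 1) - u t ≤ u (s + 1) - u s := by
    intro s t hst ht
    exact hSM.le_iff_le.mp (mono t ht s hst)
  -- positivity facts for casts
  have hTη : (0:ℝ) < (T:ℝ) - η := by
    have : (η:ℝ) < T := by exact_mod_cast hηT
    linarith
  have hηR : (0:ℝ) < (η:ℝ) := by exact_mod_cast hη
  have hTβη : (0:ℝ) < (T:ℝ) - β * η := by nlinarith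
  refine ⟨part1, part2, ?_, ?_⟩
  · exact div_nonneg (by nlinarith) hTβη.le
  -- Part 4
  · set m : ℝ := u η - u (η - 1) with hm
    have hη1 : η - 1 + 1 = η := by omega
    -- lower bound: u η - u 0 ≥ η * m
    have hA : (η:ℝ) * m ≤ u η - u 0 := by
      have htel : ∑ t ∈ Finset.range η, (u (t + 1) - u t) = u η - u 0 :=
        Finset.sum_range_sub u η
      have hbd : ∀ t ∈ Finset.range η, m ≤ u (t + 1) - u t := by
        intro t ht
        have ht' := Finset.mem_range.mp ht
        have := part2 t (η - 1) (by omega) (by omega)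
        rw [hη1] at this
        exact this
      calc (η:ℝ) * m = ∑ _t ∈ Finset.range η, m := by
            rw [Finset.sum_const, Finset.card_range, nsmul_eq_mul]
        _ ≤ ∑ t ∈ Finset.range η, (u (t + 1) - u t) := Finset.sum_le_sum hbd
        _ = u η - u 0 := htel
    -- upper bound: u T - u η ≤ (T - η) * m
    have hB : u T - u η ≤ ((T:ℝ) - η) * m := by
      have htel : ∑ t ∈ Finset.Ico η T, (u (t + 1) - u t) = u T - u η := by
        rw [Finset.sum_Ico_eq_sub _ hηT.le, Finset.sum_range_sub u,
          Finset.sum_range_sub u]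
        ring
      have hbd : ∀ t ∈ Finset.Ico η T, u (t + 1) - u t ≤ m := by
        intro t ht
        obtain ⟨h1, h2⟩ := Finset.mem_Ico.mp ht
        have := part2 (η - 1) t (by omega) (by omega)
        rw [hη1] at this
        exact this
      calc u T - u η = ∑ t ∈ Finset.Ico η T, (u (t + 1) - u t) := htel.symm
        _ ≤ ∑ _t ∈ Finset.Ico η T, m := Finset.sum_le_sum hbd
        _ = ((T:ℝ) - η) * m := by
            rw [Finset.sum_const, Nat.card_Ico, nsmul_eq_mul, Nat.cast_sub hηT.le]
    have huT : u T = β * u η := by linarith [hbc2]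
    rw [div_mul_eq_mul_div, div_le_iff₀ hTβη]
    -- from hA, hB derive (T-η) u0 ≤ (T - βη) uη, then multiply by β
    have key : ((T:ℝ) - η) * u 0 ≤ ((T:ℝ) - β * η) * u η := by
      nlinarith [mul_le_mul_of_nonneg_left hA hTη.le,
        mul_le_mul_of_nonneg_left hB hηR.le]
    nlinarith [mul_le_mul_of_nonneg_left key hβ0.le]
end
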